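/- arXiv:1405.3913 — 3 statements merged into one kernel-verified Lean document; each statement's English description precedes it below -/
import Mathlib

section
/- Let X be a random variable in the class 𝒟 and let X^L be a random variable with distribution function equal to the Lorenz curve of X. If h : (0,1) → ℝ is a function such that h·Q is integrable on (0,1), where Q is the quantile function of X, then E[h(X^L)] = (1/E[X]) ∫₀¹ h(u) Q(u) du = (1/E[X]) E[h(F(X)) X], where F is the distribution function of X. -/
/-!
Write `F` and `Q` for the distribution and quantile functions of `X`. For `0 < u < 1`,
right continuity of `F` gives the Galois connection `Q u ≤ x ↔ u ≤ F x`, so `Q` pushes the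
uniform law on `(0,1)` forward to the law of `X`; as `F` is continuous, `F (Q u) = u`, hence
`F(X)` is uniform on `(0,1)`. The Lorenz curve hypothesis says that `X^L` has density `Q / E[X]`
on `(0,1)`, which is the first identity, and the substitution `x = Q u` in
`E[h(F X) X] = ∫ h (F x) x dP_X` gives the second. Since `X ≥ 0` has no atoms, `F 0 = 0`, so
`Q > 0` on `(0,1)` and `h = (h Q) / Q` is measurable there.
-/

open MeasureTheory Set Filter

noncomputable section

variable {Ω : Type*} [MeasurableSpace Ω]

/-- Cumulative distribution function of the random variable `X` under `ℙ`. -/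
def distFun (ℙ : Measure Ω) (X : Ω → ℝ) (x : ℝ) : ℝ :=
  (ℙ {ω | X ω ≤ x}).toReal

/-- Survival (complementary distribution) function of `X` under `ℙ`. -/
def survFun (ℙ : Measure Ω) (X : Ω → ℝ) (x : ℝ) : ℝ :=
  (ℙ {ω | x < X ω}).toReal

/-- Quantile function `Q(u) = inf {x : ℝ | F(x) ≥ u}`. -/
def quantileFun (ℙ : Measure Ω) (X : Ω → ℝ) (u : ℝ) : ℝ :=
  sInf {x : ℝ | u ≤ distFun ℙ X x}

/-- Quantile density function `q(u) = Q'(u)`. -/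
def quantileDens (ℙ : Measure Ω) (X : Ω → ℝ) : ℝ → ℝ :=
  deriv (quantileFun ℙ X)

/-- The class `𝒟` of absolutely continuous random variables with finite mean whose
quantile function vanishes at `0+` and is differentiable on `(0,1)`.  (As noted in
the paper, such random variables are nonnegative with finite nonzero mean.) -/
structure MemD (ℙ : Measure Ω) (X : Ω → ℝ) : Prop where
  meas : Measurable X
  absCont : ℙ.map X ≪ (volume : Measure ℝ)
  integrable : Integrable X ℙ
  quantile_zero : Tendsto (quantileFun ℙ X) (nhdsWithin 0 (Ioi 0)) (nhds 0)
  diff : ∀ u ∈ Ioo (0:ℝ) 1, DifferentiableAt ℝ (quantileFun ℙ X) u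
  nonneg : ∀ᵐ ω ∂ℙ, 0 ≤ X ω
  mean_pos : 0 < ∫ ω, X ω ∂ℙ

/-- The Lorenz curve `L(p) = (1/E[X]) ∫₀ᵖ Q(u) du` of `X`. -/
def lorenz (ℙ : Measure Ω) (X : Ω → ℝ) (p : ℝ) : ℝ :=
  (∫ ω, X ω ∂ℙ)⁻¹ * ∫ u in (0:ℝ)..p, quantileFun ℙ X u

/-- `Z` takes values in `(0,1)` and has probability density `f` there. -/
def HasDensityOn01 (ℙ : Measure Ω) (Z : Ω → ℝ) (f : ℝ → ℝ) : Prop :=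
  (∀ ω, Z ω ∈ Ioo (0:ℝ) 1) ∧
    ∀ t ∈ Icc (0:ℝ) 1, distFun ℙ Z t = ∫ u in (0:ℝ)..t, f u

/-- Conditional value-at-risk `CVaR[X;p] = (1/(1-p)) ∫_p¹ (Q(t) - Q(p)) dt`. -/
def cvar (ℙ : Measure Ω) (X : Ω → ℝ) (p : ℝ) : ℝ :=
  (1 - p)⁻¹ * ∫ t in p..(1:ℝ), (quantileFun ℙ X t - quantileFun ℙ X p)

/-- Average value-at-risk `AVaR[X;v] = (1/v) ∫₀ᵛ Q(u) du`. -/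
def avar (ℙ : Measure Ω) (X : Ω → ℝ) (v : ℝ) : ℝ :=
  v⁻¹ * ∫ u in (0:ℝ)..v, quantileFun ℙ X u

/-- Generalized binomial coefficient `C(α,k) = α(α-1)⋯(α-k+1)/k!`. -/
def genBinom (α : ℝ) (k : ℕ) : ℝ :=
  (∏ i ∈ Finset.range k, (α - (i : ℝ))) / (Nat.factorial k : ℝ)

open ProbabilityTheory (cdf cdf_nonneg cdf_le_one monotone_cdf measure_cdf cdf_eq_real
  tendsto_cdf_atBot tendsto_cdf_atTop)

lemma ProbabilityTheory.continuous_cdf (μ : Measure ℝ) [IsProbabilityMeasure μ]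
    [NullSingletonClass μ] : Continuous (cdf μ) := by
  refine continuous_iff_continuousAt.2 fun x => ?_
  rw [(monotone_cdf μ).continuousAt_iff_leftLim_eq_rightLim, (cdf μ).rightLim_eq]
  have hjump := (cdf μ).measure_singleton x
  rw [measure_cdf, measure_singleton, eq_comm, ENNReal.ofReal_eq_zero] at hjump
  linarith [(monotone_cdf μ).leftLim_le (le_refl x)]

lemma MeasureTheory.Measure.ext_of_Iic_of_Ioc {μ ν : Measure ℝ} [IsFiniteMeasure μ] {a b : ℝ}
    (hab : a ≤ b) (hμ : μ (Ioc a b)ᶜ = 0) (hν : ν (Ioc a b)ᶜ = 0)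
    (h : ∀ c ∈ Icc a b, μ (Iic c) = ν (Iic c)) : μ = ν := by
  refine Measure.ext_of_Iic μ ν fun x => ?_
  have hclamp : Iic x ∩ Ioc a b = Iic (max a (min x b)) ∩ Ioc a b := by
    ext u; simp only [mem_inter_iff, mem_Iic, mem_Ioc, le_max_iff, le_min_iff]; grind
  rw [← measure_inter_conull hμ, ← measure_inter_conull hν, hclamp, measure_inter_conull hμ,
    measure_inter_conull hν]
  exact h _ ⟨le_max_left _ _, max_le hab (min_le_right _ _)⟩

lemma MeasureTheory.AEStronglyMeasurable.of_mul_right {α : Type*} [MeasurableSpace α]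
    {μ : Measure α} {f g : α → ℝ} (hfg : AEStronglyMeasurable (fun x => f x * g x) μ)
    (hg : AEMeasurable g μ) (hg0 : ∀ᵐ x ∂μ, g x ≠ 0) : AEStronglyMeasurable f μ :=
  (hfg.mul hg.inv.aestronglyMeasurable).congr <| by
    filter_upwards [hg0] with x hx
    simp [hx]

section DistFun

variable {ℙ : Measure Ω} {X : Ω → ℝ}

lemma distFun_zero (hX : Measurable X) (h0 : ℙ.map X {0} = 0) (hnn : 0 ≤ᵐ[ℙ] X) :
    distFun ℙ X 0 = 0 := by
  rw [Measure.map_apply hX (measurableSet_singleton 0)] at h0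
  rw [distFun, measure_mono_null_ae ?_ h0, ENNReal.toReal_zero]
  filter_upwards [hnn] with ω hω hle using le_antisymm hle hω

variable [IsProbabilityMeasure ℙ]

lemma distFun_eq_cdf (hX : Measurable X) : distFun ℙ X = cdf (ℙ.map X) := by
  have := Measure.isProbabilityMeasure_map (μ := ℙ) hX.aemeasurable
  ext x
  rw [cdf_eq_real, measureReal_def, Measure.map_apply hX measurableSet_Iic]
  rfl

lemma ofReal_distFun (x : ℝ) : ENNReal.ofReal (distFun ℙ X x) = ℙ (X ⁻¹' Iic x) :=
  ENNReal.ofReal_toReal (measure_ne_top ℙ _)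

lemma quantileFun_le_iff (hX : Measurable X) {u : ℝ} (hu : u ∈ Ioo 0 1) (x : ℝ) :
    quantileFun ℙ X u ≤ x ↔ u ≤ distFun ℙ X x := by
  rw [quantileFun, distFun_eq_cdf hX]
  set F := cdf (ℙ.map X)
  have hne : {y | u ≤ F y}.Nonempty :=
    (((tendsto_cdf_atTop _).eventually (eventually_gt_nhds hu.2)).exists).imp fun _ => le_of_lt
  have hbdd : BddBelow {y | u ≤ F y} := by
    obtain ⟨z, hz⟩ := ((tendsto_cdf_atBot _).eventually (eventually_lt_nhds hu.1)).exists
    exact ⟨z, fun y hy => le_of_not_gt fun hyz =>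
      (hz.trans_le' (hy.trans (monotone_cdf _ hyz.le))).false⟩
  have hmem : u ≤ F (sInf {y | u ≤ F y}) := by
    refine ge_of_tendsto ((F.right_continuous _).mono Ioi_subset_Ici_self) ?_
    filter_upwards [self_mem_nhdsWithin] with y hy
    obtain ⟨z, hz, hzy⟩ := exists_lt_of_csInf_lt hne hy
    exact hz.trans (monotone_cdf _ hzy.le)
  exact ⟨fun hx => hmem.trans (monotone_cdf _ hx), fun hx => csInf_le hbdd hx⟩

lemma monotoneOn_quantileFun (hX : Measurable X) : MonotoneOn (quantileFun ℙ X) (Ioo 0 1) :=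
  fun _ hu _ hv huv => (quantileFun_le_iff hX hu _).2 <|
    huv.trans ((quantileFun_le_iff hX hv _).1 le_rfl)

lemma aemeasurable_quantileFun (hX : Measurable X) :
    AEMeasurable (quantileFun ℙ X) (volume.restrict (Ioo 0 1)) :=
  aemeasurable_restrict_of_monotoneOn measurableSet_Ioo (monotoneOn_quantileFun hX)

lemma map_quantileFun (hX : Measurable X) :
    (volume.restrict (Ioo 0 1)).map (quantileFun ℙ X) = ℙ.map X := by
  refine (Measure.ext_of_Iic _ _ fun x => ?_).symm
  have hF : distFun ℙ X x ∈ Icc 0 1 := by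
    rw [distFun_eq_cdf hX]; exact ⟨cdf_nonneg _ x, cdf_le_one _ x⟩
  have hpre : quantileFun ℙ X ⁻¹' Iic x ∩ Ioo 0 1 = Ioo 0 1 ∩ Iic (distFun ℙ X x) := by
    ext u
    simp only [mem_inter_iff, mem_preimage, mem_Iic]
    exact ⟨fun h => ⟨h.2, (quantileFun_le_iff hX h.2 x).1 h.1⟩,
      fun h => ⟨(quantileFun_le_iff hX h.1 x).2 h.2, h.1⟩⟩
  rw [Measure.map_apply hX measurableSet_Iic, ← ofReal_distFun,
    Measure.map_apply_of_aemeasurable (aemeasurable_quantileFun hX) measurableSet_Iic,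
    Measure.restrict_apply' measurableSet_Ioo, hpre,
    measure_congr (Ioo_ae_eq_Ioc.inter (ae_eq_refl (Iic (distFun ℙ X x)))), Ioc_inter_Iic,
    Real.volume_Ioc, min_eq_right hF.2, sub_zero]

lemma distFun_quantileFun (hX : Measurable X) (hc : Continuous (distFun ℙ X)) {u : ℝ}
    (hu : u ∈ Ioo 0 1) : distFun ℙ X (quantileFun ℙ X u) = u := by
  refine le_antisymm ?_ ((quantileFun_le_iff hX hu _).1 le_rfl)
  refine le_of_tendsto
    (hc.continuousAt.tendsto.mono_left (nhdsWithin_le_nhds (s := Iio (quantileFun ℙ X u)))) ?_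
  filter_upwards [self_mem_nhdsWithin] with y (hy : y < quantileFun ℙ X u)
  exact (not_le.1 fun h => hy.not_ge ((quantileFun_le_iff hX hu y).2 h)).le

lemma map_distFun (hX : Measurable X) (hc : Continuous (distFun ℙ X)) :
    (ℙ.map X).map (distFun ℙ X) = volume.restrict (Ioo 0 1) := by
  have hF : Measurable (distFun ℙ X) := by
    rw [distFun_eq_cdf hX]; exact (monotone_cdf _).measurable
  rw [← map_quantileFun hX, AEMeasurable.map_map_of_aemeasurable hF.aemeasurable
    (aemeasurable_quantileFun hX)]
  conv_rhs => rw [← Measure.map_id (μ := volume.restrict (Ioo 0 1))]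
  refine Measure.map_congr ?_
  filter_upwards [ae_restrict_mem measurableSet_Ioo] with u hu
  exact distFun_quantileFun hX hc hu

lemma quantileFun_pos (hX : Measurable X) (h0 : distFun ℙ X 0 = 0) {u : ℝ}
    (hu : u ∈ Ioo 0 1) :
    0 < quantileFun ℙ X u :=
  lt_of_not_ge fun h => hu.1.not_ge ((quantileFun_le_iff hX hu 0).1 h |>.trans_eq h0)

lemma integral_comp_distFun_mul (hX : Measurable X) (hc : Continuous (distFun ℙ X))
    {h : ℝ → ℝ} (hh : AEStronglyMeasurable h (volume.restrict (Ioo 0 1))) :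
    ∫ ω, h (distFun ℙ X (X ω)) * X ω ∂ℙ =
      ∫ u in Ioo 0 1, h u * quantileFun ℙ X u := by
  have hg : AEStronglyMeasurable (fun x => h (distFun ℙ X x) * x) (ℙ.map X) :=
    ((map_distFun hX hc ▸ hh).comp_aemeasurable hc.measurable.aemeasurable).mul
      aestronglyMeasurable_id
  calc ∫ ω, h (distFun ℙ X (X ω)) * X ω ∂ℙ
      = ∫ x, h (distFun ℙ X x) * x ∂(ℙ.map X) := (integral_map hX.aemeasurable hg).symm
    _ = ∫ u in Ioo 0 1, h (distFun ℙ X (quantileFun ℙ X u)) * quantileFun ℙ X u := by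
        rw [← map_quantileFun hX] at hg ⊢
        exact integral_map (aemeasurable_quantileFun hX) hg
    _ = ∫ u in Ioo 0 1, h u * quantileFun ℙ X u :=
        setIntegral_congr_fun measurableSet_Ioo fun u hu => by
          rw [distFun_quantileFun hX hc hu]

end DistFun

section Density

variable {ℙ : Measure Ω} [IsProbabilityMeasure ℙ] {Z : Ω → ℝ} {f : ℝ → ℝ}

lemma HasDensityOn01.integrableOn (hZ : HasDensityOn01 ℙ Z f) : IntegrableOn f (Ioc 0 1) := by
  have hone : distFun ℙ Z 1 = 1 := by
    rw [distFun, show {ω | Z ω ≤ 1} = univ from eq_univ_of_forall fun ω => (hZ.1 ω).2.le,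
      measure_univ, ENNReal.toReal_one]
  have htotal := hZ.2 1 ⟨zero_le_one, le_rfl⟩
  by_contra hf
  rw [hone, intervalIntegral.integral_undef fun h =>
    hf ((intervalIntegrable_iff_integrableOn_Ioc_of_le zero_le_one).1 h)] at htotal
  exact one_ne_zero htotal

lemma HasDensityOn01.map_eq_withDensity (hZ : HasDensityOn01 ℙ Z f) (hZm : Measurable Z)
    (hf : 0 ≤ᵐ[volume.restrict (Ioo 0 1)] f) :
    ℙ.map Z = (volume.restrict (Ioo 0 1)).withDensity fun u => ENNReal.ofReal (f u) := by
  have : IsProbabilityMeasure (ℙ.map Z) := Measure.isProbabilityMeasure_map hZm.aemeasurable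
  rw [Measure.restrict_congr_set Ioo_ae_eq_Ioc] at hf ⊢
  refine Measure.ext_of_Iic_of_Ioc zero_le_one ?_ ?_ fun c hc => ?_
  · rw [Measure.map_apply hZm measurableSet_Ioc.compl, preimage_compl,
      show Z ⁻¹' Ioc 0 1 = univ from eq_univ_of_forall fun ω => Ioo_subset_Ioc_self (hZ.1 ω),
      compl_univ, measure_empty]
  · rw [withDensity_apply _ measurableSet_Ioc.compl,
      Measure.restrict_restrict measurableSet_Ioc.compl, compl_inter_self]
    simp
  · have hIoc : Ioc 0 c ⊆ Ioc 0 1 := Ioc_subset_Ioc_right hc.2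
    rw [Measure.map_apply hZm measurableSet_Iic, ← ofReal_distFun, hZ.2 c hc,
      withDensity_apply _ measurableSet_Iic, Measure.restrict_restrict measurableSet_Iic,
      inter_comm, Ioc_inter_Iic, min_eq_right hc.2, intervalIntegral.integral_of_le hc.1,
      ofReal_integral_eq_lintegral_ofReal (hZ.integrableOn.mono_set hIoc)
        (ae_restrict_of_ae_restrict_of_subset hIoc hf)]

lemma HasDensityOn01.integral_comp {E : Type*} [NormedAddCommGroup E] [NormedSpace ℝ E]
    (hZ : HasDensityOn01 ℙ Z f) (hZm : Measurable Z) (hf : 0 ≤ᵐ[volume.restrict (Ioo 0 1)] f)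
    {g : ℝ → E} (hg : AEStronglyMeasurable g (volume.restrict (Ioo 0 1))) :
    ∫ ω, g (Z ω) ∂ℙ = ∫ u in Ioo 0 1, f u • g u := by
  have hmap := hZ.map_eq_withDensity hZm hf
  have hfm : AEMeasurable f (volume.restrict (Ioo 0 1)) :=
    (hZ.integrableOn.mono_set Ioo_subset_Ioc_self).aemeasurable
  have hgZ : AEStronglyMeasurable g (ℙ.map Z) :=
    hmap ▸ hg.mono_ac (withDensity_absolutelyContinuous _ _)
  rw [← integral_map hZm.aemeasurable hgZ, hmap,
    integral_withDensity_eq_integral_toReal_smul₀ hfm.ennreal_ofReal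
      (ae_of_all _ fun _ => ENNReal.ofReal_lt_top)]
  refine integral_congr_ae ?_
  filter_upwards [hf] with u hu
  rw [ENNReal.toReal_ofReal hu]

end Density

/-- Proposition 2.1.  For `X ∈ 𝒟` and `X^L` with distribution function the
Lorenz curve of `X`, and `h` with `h·Q` integrable on `(0,1)`,
`E[h(X^L)] = (1/E[X]) ∫₀¹ h(u) Q(u) du = (1/E[X]) E[h(F(X)) X]`. -/
theorem stmt0 (ℙ : Measure Ω) [IsProbabilityMeasure ℙ] (X XL : Ω → ℝ)
    (hX : MemD ℙ X) (hXLmeas : Measurable XL)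
    (hXLval : ∀ ω, XL ω ∈ Ioo (0:ℝ) 1)
    (hXLcdf : ∀ p ∈ Icc (0:ℝ) 1, distFun ℙ XL p = lorenz ℙ X p)
    (h : ℝ → ℝ)
    (hInt : IntegrableOn (fun u => h u * quantileFun ℙ X u) (Ioo 0 1) volume) :
    ∫ ω, h (XL ω) ∂ℙ
        = (∫ ω, X ω ∂ℙ)⁻¹ * ∫ u in Ioo (0:ℝ) 1, h u * quantileFun ℙ X u ∧
    ∫ ω, h (XL ω) ∂ℙ
        = (∫ ω, X ω ∂ℙ)⁻¹ * ∫ ω, h (distFun ℙ X (X ω)) * X ω ∂ℙ := by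
  have : IsProbabilityMeasure (ℙ.map X) := Measure.isProbabilityMeasure_map hX.meas.aemeasurable
  have : NullSingletonClass (ℙ.map X) := ⟨fun x => hX.absCont (measure_singleton x)⟩
  have hc : Continuous (distFun ℙ X) := by
    rw [distFun_eq_cdf hX.meas]; exact ProbabilityTheory.continuous_cdf _
  have hQpos : ∀ u ∈ Ioo (0:ℝ) 1, 0 < quantileFun ℙ X u := fun u =>
    quantileFun_pos hX.meas (distFun_zero hX.meas (measure_singleton 0) hX.nonneg)
  have hh : AEStronglyMeasurable h (volume.restrict (Ioo 0 1)) :=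
    hInt.aestronglyMeasurable.of_mul_right (aemeasurable_quantileFun hX.meas)
      ((ae_restrict_mem measurableSet_Ioo).mono fun u hu => (hQpos u hu).ne')
  have hXL : HasDensityOn01 ℙ XL fun u => (∫ ω, X ω ∂ℙ)⁻¹ * quantileFun ℙ X u :=
    ⟨hXLval, fun p hp => by rw [hXLcdf p hp, lorenz, intervalIntegral.integral_const_mul]⟩
  have hLorenz : ∫ ω, h (XL ω) ∂ℙ
      = (∫ ω, X ω ∂ℙ)⁻¹ * ∫ u in Ioo (0:ℝ) 1, h u * quantileFun ℙ X u := by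
    rw [hXL.integral_comp hXLmeas ((ae_restrict_mem measurableSet_Ioo).mono fun u hu =>
      mul_nonneg (inv_nonneg.2 hX.mean_pos.le) (hQpos u hu).le) hh, ← integral_const_mul]
    simp only [smul_eq_mul]
    congr 1 with u
    ring
  exact ⟨hLorenz, by rw [hLorenz, integral_comp_distFun_mul hX.meas hc hh]⟩
end
end

section
/- Let X and Y be random variables taking values in ℝ, with quantile functions Q_X and Q_Y, such that −∞ < E[X] < E[Y] < +∞. Then the function f(u) = (Q_Y(u) − Q_X(u))/(E[Y] − E[X]), 0 < u < 1, is a probability density function (of an absolutely continuous random variable taking values in (0,1)) if, and only if, X ≤_st Y, i.e. Q_X(u) ≤ Q_Y(u) for all u ∈ (0,1). -/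
/-! The quantile function `Q_X` pushes the uniform distribution on `(0,1)` forward to the law of
`X` (inverse transform sampling), so `∫₀¹ Q_X = E[X]`. Hence `f` always integrates to `1`, and it
is a density exactly when it is nonnegative, i.e. when `Q_X ≤ Q_Y` on `(0,1)`. -/

open MeasureTheory Set Filter

noncomputable section

variable {Ω : Type*} [MeasurableSpace Ω]

namespace ProbabilityTheory

def cdfQuantile (μ : Measure ℝ) (u : ℝ) : ℝ :=
  sInf {x : ℝ | u ≤ cdf μ x}

variable (μ : Measure ℝ)

lemma cdfQuantile_le_iff {u : ℝ} (hu : u ∈ Ioo (0 : ℝ) 1) (t : ℝ) :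
    cdfQuantile μ u ≤ t ↔ u ≤ cdf μ t := by
  set S := {x : ℝ | u ≤ cdf μ x}
  have hne : S.Nonempty :=
    ((tendsto_cdf_atTop μ).eventually (eventually_gt_nhds hu.2)).exists.imp fun _ h => h.le
  have hbdd : BddBelow S := by
    obtain ⟨x₀, hx₀⟩ := ((tendsto_cdf_atBot μ).eventually (eventually_lt_nhds hu.1)).exists
    refine ⟨x₀, fun x hx => le_of_not_gt fun hlt => ?_⟩
    exact (hx.trans (monotone_cdf μ hlt.le)).not_gt hx₀
  -- The infimum is attained because the cdf is right-continuous.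
  have hmem : sInf S ∈ S := by
    refine ge_of_tendsto (((cdf μ).right_continuous _).mono Ioi_subset_Ici_self).tendsto ?_
    filter_upwards [self_mem_nhdsWithin] with x hx
    obtain ⟨s, hs, hsx⟩ := (csInf_lt_iff hbdd hne).mp hx
    exact hs.trans (monotone_cdf μ hsx.le)
  exact ⟨fun h => hmem.trans (monotone_cdf μ h), fun h => csInf_le hbdd h⟩

lemma monotoneOn_cdfQuantile : MonotoneOn (cdfQuantile μ) (Ioo 0 1) := fun _ hu _ hv huv =>
  (cdfQuantile_le_iff μ hu _).mpr <| huv.trans <| (cdfQuantile_le_iff μ hv _).mp le_rfl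

lemma aemeasurable_cdfQuantile : AEMeasurable (cdfQuantile μ) (volume.restrict (Ioo 0 1)) :=
  aemeasurable_restrict_of_monotoneOn measurableSet_Ioo (monotoneOn_cdfQuantile μ)

instance : IsProbabilityMeasure (volume.restrict (Ioo (0 : ℝ) 1)) :=
  ⟨by rw [Measure.restrict_apply_univ, Real.volume_Ioo, sub_zero, ENNReal.ofReal_one]⟩

lemma map_cdfQuantile [IsProbabilityMeasure μ] :
    (volume.restrict (Ioo 0 1)).map (cdfQuantile μ) = μ := by
  have := Measure.isProbabilityMeasure_map (μ := volume.restrict (Ioo (0 : ℝ) 1))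
    (aemeasurable_cdfQuantile μ)
  refine Measure.ext_of_Iic _ _ fun t => ?_
  have hpre : cdfQuantile μ ⁻¹' Iic t ∩ Ioo 0 1 = Iic (cdf μ t) ∩ Ioo 0 1 := by
    ext u
    simp only [mem_inter_iff, mem_preimage, mem_Iic, and_congr_left_iff]
    exact fun hu => cdfQuantile_le_iff μ hu t
  rw [Measure.map_apply_of_aemeasurable (aemeasurable_cdfQuantile μ) measurableSet_Iic,
    Measure.restrict_apply' measurableSet_Ioo, hpre,
    measure_congr ((ae_eq_refl _).inter Ioo_ae_eq_Ioc), inter_comm, Ioc_inter_Iic,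
    Real.volume_Ioc, sub_zero, min_eq_right (cdf_le_one μ t), ofReal_cdf]

lemma integrableOn_cdfQuantile [IsProbabilityMeasure μ] (hμ : Integrable id μ) :
    IntegrableOn (cdfQuantile μ) (Ioo 0 1) := by
  rwa [← map_cdfQuantile μ,
    integrable_map_measure aestronglyMeasurable_id (aemeasurable_cdfQuantile μ)] at hμ

lemma integral_cdfQuantile [IsProbabilityMeasure μ] :
    ∫ u in Ioo 0 1, cdfQuantile μ u = ∫ x, x ∂μ := by
  conv_rhs => rw [← map_cdfQuantile μ]
  exact (integral_map (aemeasurable_cdfQuantile μ) aestronglyMeasurable_id).symm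

end ProbabilityTheory

section

variable (ℙ : Measure Ω) [IsProbabilityMeasure ℙ] {X : Ω → ℝ}

lemma quantileFun_eq_cdfQuantile (hX : Measurable X) :
    quantileFun ℙ X = ProbabilityTheory.cdfQuantile (ℙ.map X) := by
  have := Measure.isProbabilityMeasure_map (μ := ℙ) hX.aemeasurable
  ext u
  simp only [quantileFun, ProbabilityTheory.cdfQuantile, distFun, ProbabilityTheory.cdf_eq_real,
    measureReal_def, Measure.map_apply hX measurableSet_Iic]
  rfl

lemma integrableOn_quantileFun (hX : Measurable X) (hXint : Integrable X ℙ) :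
    IntegrableOn (quantileFun ℙ X) (Ioo 0 1) := by
  have := Measure.isProbabilityMeasure_map (μ := ℙ) hX.aemeasurable
  rw [quantileFun_eq_cdfQuantile ℙ hX]
  exact ProbabilityTheory.integrableOn_cdfQuantile _ <|
    (integrable_map_measure aestronglyMeasurable_id hX.aemeasurable).mpr hXint

lemma integral_quantileFun (hX : Measurable X) :
    ∫ u in Ioo 0 1, quantileFun ℙ X u = ∫ ω, X ω ∂ℙ := by
  have := Measure.isProbabilityMeasure_map (μ := ℙ) hX.aemeasurable
  rw [quantileFun_eq_cdfQuantile ℙ hX, ProbabilityTheory.integral_cdfQuantile]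
  exact integral_map hX.aemeasurable aestronglyMeasurable_id

end

/-- Proposition 4.1.  `f(u) = (Q_Y(u) - Q_X(u))/(E[Y] - E[X])` is a
probability density function on `(0,1)` iff `X ≤_st Y`. -/
theorem stmt5 (ℙ : Measure Ω) [IsProbabilityMeasure ℙ] (X Y : Ω → ℝ)
    (hXmeas : Measurable X) (hYmeas : Measurable Y)
    (hXint : Integrable X ℙ) (hYint : Integrable Y ℙ)
    (hE : ∫ ω, X ω ∂ℙ < ∫ ω, Y ω ∂ℙ) :
    ((∀ u ∈ Ioo (0:ℝ) 1,
        0 ≤ (quantileFun ℙ Y u - quantileFun ℙ X u) / (∫ ω, Y ω ∂ℙ - ∫ ω, X ω ∂ℙ)) ∧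
      IntegrableOn
        (fun u => (quantileFun ℙ Y u - quantileFun ℙ X u) / (∫ ω, Y ω ∂ℙ - ∫ ω, X ω ∂ℙ))
        (Ioo 0 1) volume ∧
      ∫ u in Ioo (0:ℝ) 1,
        (quantileFun ℙ Y u - quantileFun ℙ X u) / (∫ ω, Y ω ∂ℙ - ∫ ω, X ω ∂ℙ) = 1)
    ↔ ∀ u ∈ Ioo (0:ℝ) 1, quantileFun ℙ X u ≤ quantileFun ℙ Y u := by
  have hgap : 0 < ∫ ω, Y ω ∂ℙ - ∫ ω, X ω ∂ℙ := sub_pos.2 hE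
  have hQX := integrableOn_quantileFun ℙ hXmeas hXint
  have hQY := integrableOn_quantileFun ℙ hYmeas hYint
  refine ⟨fun ⟨hdens_nonneg, _, _⟩ u hu => ?_, fun hle => ⟨?_, ?_, ?_⟩⟩
  · have := (le_div_iff₀ hgap).1 (hdens_nonneg u hu)
    rwa [zero_mul, sub_nonneg] at this
  · exact fun u hu => div_nonneg (sub_nonneg.2 (hle u hu)) hgap.le
  · exact (hQY.sub hQX).div_const _
  · rw [integral_div, integral_sub hQY hQX, integral_quantileFun ℙ hXmeas,
      integral_quantileFun ℙ hYmeas, div_self hgap.ne']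
end
end

section
/- Let X and Y be random variables in the class 𝒟 with quantile functions Q_X, Q_Y, 0 < E[X] < E[Y] < +∞ and X ≤_st Y, and let X^L, Y^L, Z^L be the random variables on (0,1) with densities Q_X(u)/E[X], Q_Y(u)/E[Y], and (Q_Y(u) − Q_X(u))/(E[Y] − E[X]) respectively. Then the following three conditions are equivalent: (a) X^L ≤_st Y^L; (b) X^L ≤_st Z^L; (c) Y^L ≤_st Z^L. -/
/-
The three conditions only involve `∫₀ᵗ Q_X` and `∫₀ᵗ Q_Y`, which are finite for
`t < 1` because quantile functions of nonnegative variables are nonnegative and monotone. With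
`a = E[X] < b = E[Y]`, the value `∫₀ᵗ Q_Y / b` is the convex combination, with weights `a / b` and
`(b - a) / b`, of `∫₀ᵗ Q_X / a` and `∫₀ᵗ (Q_Y - Q_X) / (b - a)`, so it lies between them: it
is below the first iff the second is, iff the second is below it.
-/

open MeasureTheory Set Filter

noncomputable section

variable {Ω : Type*} [MeasurableSpace Ω]

section Quantile

variable {ℙ : Measure Ω} {X : Ω → ℝ}

lemma distFun_eq_zero_of_neg (hX : ∀ᵐ ω ∂ℙ, 0 ≤ X ω) {x : ℝ} (hx : x < 0) :
    distFun ℙ X x = 0 := by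
  have hneg : ℙ {ω | X ω < 0} = 0 := by
    simpa only [ae_iff, not_le] using hX
  have hle : ℙ {ω | X ω ≤ x} = 0 :=
    measure_mono_null (fun ω (hω : X ω ≤ x) => hω.trans_lt hx) hneg
  rw [distFun, hle, ENNReal.toReal_zero]

lemma quantileFun_of_nonpos {u : ℝ} (hu : u ≤ 0) : quantileFun ℙ X u = 0 := by
  have huniv : {x : ℝ | u ≤ distFun ℙ X x} = univ :=
    eq_univ_of_forall fun _ => hu.trans ENNReal.toReal_nonneg
  rw [quantileFun, huniv]
  exact Real.sInf_of_not_bddBelow not_bddBelow_univ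

lemma quantileFun_set_subset_Ici (hX : ∀ᵐ ω ∂ℙ, 0 ≤ X ω) {u : ℝ} (hu : 0 < u) :
    {x : ℝ | u ≤ distFun ℙ X x} ⊆ Ici 0 := fun x hx => by
  by_contra hneg
  have := distFun_eq_zero_of_neg hX (not_le.1 hneg)
  simp only [mem_ofPred_eq, this] at hx
  linarith

lemma quantileFun_nonneg (hX : ∀ᵐ ω ∂ℙ, 0 ≤ X ω) (u : ℝ) : 0 ≤ quantileFun ℙ X u := by
  rcases le_or_gt u 0 with hu | hu
  · exact (quantileFun_of_nonpos hu).ge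
  · exact Real.sInf_nonneg fun x hx => quantileFun_set_subset_Ici hX hu hx

lemma quantileFun_set_nonempty [IsProbabilityMeasure ℙ] {u : ℝ} (hu : u < 1) :
    {x : ℝ | u ≤ distFun ℙ X x}.Nonempty := by
  have hmono : Monotone fun x : ℝ => {ω | X ω ≤ x} := fun _ _ hxy _ hω => le_trans hω hxy
  have hunion : ⋃ x : ℝ, {ω | X ω ≤ x} = univ :=
    eq_univ_of_forall fun ω => mem_iUnion.2 ⟨X ω, le_refl (X ω)⟩
  have hlim : Tendsto (distFun ℙ X) atTop (nhds 1) := by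
    have := tendsto_measure_iUnion_atTop (μ := ℙ) hmono
    rw [hunion, measure_univ] at this
    exact (ENNReal.tendsto_toReal ENNReal.one_ne_top).comp this
  exact (hlim.eventually (eventually_ge_nhds hu)).exists

lemma quantileFun_monotoneOn [IsProbabilityMeasure ℙ] (hX : ∀ᵐ ω ∂ℙ, 0 ≤ X ω) :
    MonotoneOn (quantileFun ℙ X) (Iio 1) := by
  intro u _ v hv huv
  rcases le_or_gt u 0 with hu | hu
  · rw [quantileFun_of_nonpos hu]
    exact quantileFun_nonneg hX v
  · exact csInf_le_csInf ⟨0, fun x hx => quantileFun_set_subset_Ici hX hu hx⟩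
      (quantileFun_set_nonempty hv) fun x hx => huv.trans hx

lemma intervalIntegrable_quantileFun [IsProbabilityMeasure ℙ] (hX : ∀ᵐ ω ∂ℙ, 0 ≤ X ω)
    {s t : ℝ} (hs : s < 1) (ht : t < 1) :
    IntervalIntegrable (quantileFun ℙ X) volume s t :=
  ((quantileFun_monotoneOn hX).mono fun _ hx => hx.2.trans_lt (max_lt hs ht)).intervalIntegrable

end Quantile

section Mediant

variable {a b x y : ℝ}

lemma div_le_div_iff_sub_div_sub_le_div (ha : 0 < a) (hab : a < b) :
    y / b ≤ x / a ↔ (y - x) / (b - a) ≤ x / a := by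
  rw [div_le_div_iff₀ (ha.trans hab) ha, div_le_div_iff₀ (sub_pos.2 hab) ha]
  constructor <;> intro h <;> nlinarith

lemma sub_div_sub_le_div_iff_sub_div_sub_le_div (ha : 0 < a) (hab : a < b) :
    (y - x) / (b - a) ≤ x / a ↔ (y - x) / (b - a) ≤ y / b := by
  rw [div_le_div_iff₀ (sub_pos.2 hab) ha, div_le_div_iff₀ (sub_pos.2 hab) (ha.trans hab)]
  constructor <;> intro h <;> nlinarith

end Mediant

theorem stmt10_general (ℙ : Measure Ω) [IsProbabilityMeasure ℙ] (X Y : Ω → ℝ)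
    (hX : MemD ℙ X) (hY : MemD ℙ Y)
    (hEX : 0 < ∫ ω, X ω ∂ℙ) (hE : ∫ ω, X ω ∂ℙ < ∫ ω, Y ω ∂ℙ) :
    ((∀ t ∈ Ioo (0:ℝ) 1,
        ∫ u in (0:ℝ)..t, quantileFun ℙ Y u / ∫ ω, Y ω ∂ℙ
          ≤ ∫ u in (0:ℝ)..t, quantileFun ℙ X u / ∫ ω, X ω ∂ℙ) ↔
      (∀ t ∈ Ioo (0:ℝ) 1,
        ∫ u in (0:ℝ)..t,
            (quantileFun ℙ Y u - quantileFun ℙ X u) / (∫ ω, Y ω ∂ℙ - ∫ ω, X ω ∂ℙ)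
          ≤ ∫ u in (0:ℝ)..t, quantileFun ℙ X u / ∫ ω, X ω ∂ℙ)) ∧
    ((∀ t ∈ Ioo (0:ℝ) 1,
        ∫ u in (0:ℝ)..t,
            (quantileFun ℙ Y u - quantileFun ℙ X u) / (∫ ω, Y ω ∂ℙ - ∫ ω, X ω ∂ℙ)
          ≤ ∫ u in (0:ℝ)..t, quantileFun ℙ X u / ∫ ω, X ω ∂ℙ) ↔
      (∀ t ∈ Ioo (0:ℝ) 1,
        ∫ u in (0:ℝ)..t,
            (quantileFun ℙ Y u - quantileFun ℙ X u) / (∫ ω, Y ω ∂ℙ - ∫ ω, X ω ∂ℙ)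
          ≤ ∫ u in (0:ℝ)..t, quantileFun ℙ Y u / ∫ ω, Y ω ∂ℙ)) := by
  have hsub : ∀ t ∈ Ioo (0:ℝ) 1,
      ∫ u in (0:ℝ)..t, (quantileFun ℙ Y u - quantileFun ℙ X u) =
        (∫ u in (0:ℝ)..t, quantileFun ℙ Y u) - ∫ u in (0:ℝ)..t, quantileFun ℙ X u :=
    fun t ht => intervalIntegral.integral_sub
      (intervalIntegrable_quantileFun hY.nonneg zero_lt_one ht.2)
      (intervalIntegrable_quantileFun hX.nonneg zero_lt_one ht.2)
  simp only [intervalIntegral.integral_div]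
  refine ⟨forall₂_congr fun t ht => ?_, forall₂_congr fun t ht => ?_⟩ <;> rw [hsub t ht]
  exacts [div_le_div_iff_sub_div_sub_le_div hEX hE,
    sub_div_sub_le_div_iff_sub_div_sub_le_div hEX hE]

/-- the conditions `X^L ≤_st Y^L`, `X^L ≤_st Z^L` and `Y^L ≤_st Z^L`
are equivalent; the usual stochastic order is expressed through the distribution
functions obtained from the densities of `X^L`, `Y^L`, `Z^L`. -/
theorem stmt10 (ℙ : Measure Ω) [IsProbabilityMeasure ℙ] (X Y : Ω → ℝ)
    (hX : MemD ℙ X) (hY : MemD ℙ Y)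
    (hEX : 0 < ∫ ω, X ω ∂ℙ) (hE : ∫ ω, X ω ∂ℙ < ∫ ω, Y ω ∂ℙ)
    (hst : ∀ u ∈ Ioo (0:ℝ) 1, quantileFun ℙ X u ≤ quantileFun ℙ Y u) :
    ((∀ t ∈ Ioo (0:ℝ) 1,
        ∫ u in (0:ℝ)..t, quantileFun ℙ Y u / ∫ ω, Y ω ∂ℙ
          ≤ ∫ u in (0:ℝ)..t, quantileFun ℙ X u / ∫ ω, X ω ∂ℙ) ↔
      (∀ t ∈ Ioo (0:ℝ) 1,
        ∫ u in (0:ℝ)..t,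
            (quantileFun ℙ Y u - quantileFun ℙ X u) / (∫ ω, Y ω ∂ℙ - ∫ ω, X ω ∂ℙ)
          ≤ ∫ u in (0:ℝ)..t, quantileFun ℙ X u / ∫ ω, X ω ∂ℙ)) ∧
    ((∀ t ∈ Ioo (0:ℝ) 1,
        ∫ u in (0:ℝ)..t,
            (quantileFun ℙ Y u - quantileFun ℙ X u) / (∫ ω, Y ω ∂ℙ - ∫ ω, X ω ∂ℙ)
          ≤ ∫ u in (0:ℝ)..t, quantileFun ℙ X u / ∫ ω, X ω ∂ℙ) ↔
      (∀ t ∈ Ioo (0:ℝ) 1,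
        ∫ u in (0:ℝ)..t,
            (quantileFun ℙ Y u - quantileFun ℙ X u) / (∫ ω, Y ω ∂ℙ - ∫ ω, X ω ∂ℙ)
          ≤ ∫ u in (0:ℝ)..t, quantileFun ℙ Y u / ∫ ω, Y ω ∂ℙ)) :=
  stmt10_general ℙ X Y hX hY hEX hE
end
end
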